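/- arXiv:2605.17122 — 2 statements merged into one kernel-verified Lean document; each statement's English description precedes it below -/
import Mathlib

section
/- Let q = 2n+1 be an odd integer with n ≥ 1, let t be an integer with 1 ≤ t ≤ q−1, and set g = gcd(t, q). Then the Lee weight of the codeword c_t = (t, 2t, …, nt) over ZMod q satisfies ∑_{k=1}^{n} ‖k·t‖_q = (q² − g²)/8. In particular, the Lee weight of c_t depends only on gcd(t, q). -/
/-- The Lee weight of `x : ZMod q`: `min(x.val, q - x.val)`. -/
def leeWt (q : ℕ) (x : ZMod q) : ℕ := min x.val (q - x.val)

open Finset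


lemma leeWt_neg' (q : ℕ) [NeZero q] (x : ZMod q) :
    min (-x).val (q - (-x).val) = min x.val (q - x.val) := by
  rcases eq_or_ne x 0 with h | h
  · simp [h]
  · have hv : x.val < q := ZMod.val_lt x
    rw [ZMod.neg_val, if_neg h, Nat.sub_sub_self hv.le, min_comm]

lemma sum_range_zmod (d : ℕ) [NeZero d] (F : ZMod d → ℕ) :
    ∑ k ∈ range d, F (k : ZMod d) = ∑ x : ZMod d, F x := by
  refine Finset.sum_nbij' (fun k => (k : ZMod d)) (fun x => x.val) ?_ ?_ ?_ ?_ ?_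
  · intro a _; exact Finset.mem_univ _
  · intro x _; exact Finset.mem_range.2 (ZMod.val_lt x)
  · intro a ha; exact ZMod.val_natCast_of_lt (Finset.mem_range.1 ha)
  · intro x _; exact ZMod.natCast_rightInverse x
  · intro a _; rfl

lemma sum_mul_unit (d : ℕ) [NeZero d] (F : ZMod d → ℕ) (u : (ZMod d)ˣ) :
    ∑ x : ZMod d, F (x * u) = ∑ x : ZMod d, F x :=
  Equiv.sum_comp (Units.mulRight u) F

lemma gaussMin (m : ℕ) : ∑ r ∈ range (2*m+1), min r (2*m+1-r) = m*(m+1) := by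
  have h : 2*m+1 = (m+1) + m := by ring
  rw [h, Finset.sum_range_add]
  have h1 : ∀ x ∈ range (m+1), min x ((m+1)+m-x) = x := by
    intro x hx; have := Finset.mem_range.1 hx; omega
  have h2 : ∀ x ∈ range m, min ((m+1)+x) ((m+1)+m-((m+1)+x)) = m - x := by
    intro x hx; have := Finset.mem_range.1 hx; omega
  rw [Finset.sum_congr rfl h1, Finset.sum_congr rfl h2]
  have g1 : (∑ x ∈ range (m+1), x) * 2 = (m+1) * m := by
    simpa using Finset.sum_range_id_mul_two (m+1)
  have g2 : ∑ x ∈ range m, (m - x) = ∑ x ∈ range m, (x+1) := by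
    rw [← Finset.sum_range_reflect (fun j => m - j) m]
    exact Finset.sum_congr rfl fun x hx => by have := Finset.mem_range.1 hx; omega
  have g3 : (∑ x ∈ range m, (x+1)) = ∑ x ∈ range (m+1), x := by
    rw [Finset.sum_range_succ' (fun i => i) m]; simp
  have g4 := Finset.sum_range_id_mul_two (m+1)
  nlinarith [g1, g2, g3]

lemma shiftper (d : ℕ) (f : ℕ → ℕ) (hf : ∀ k, f (k + d) = f k) :
    ∀ j x, f (j*d + x) = f x := by
  intro j
  induction j with
  | zero => simp
  | succ j ih =>
    intro x
    have h : (j+1)*d + x = j*d + x + d := by ring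
    rw [h, hf, ih]

lemma sum_periodic (d : ℕ) (f : ℕ → ℕ) (hf : ∀ k, f (k + d) = f k) (g : ℕ) :
    ∑ k ∈ range (g*d), f k = g * ∑ k ∈ range d, f k := by
  induction g with
  | zero => simp
  | succ g ih =>
    have h : (g+1)*d = g*d + d := by ring
    rw [h, Finset.sum_range_add, ih, Nat.succ_mul]
    congr 1
    exact Finset.sum_congr rfl fun x _ => shiftper d f hf g x

lemma mul_min_sub (g x d : ℕ) (hx : x ≤ d) :
    min (g*x) (g*d - g*x) = g * min x (d - x) := by
  have e : g*d - g*x = g*(d-x) := by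
    obtain ⟨c, rfl⟩ : ∃ c, d = x + c := ⟨d - x, (Nat.add_sub_cancel' hx).symm⟩
    simp [Nat.mul_add]
  rw [e]
  rcases le_total x (d - x) with h | h
  · rw [min_eq_left h, min_eq_left (Nat.mul_le_mul_left g h)]
  · rw [min_eq_right h, min_eq_right (Nat.mul_le_mul_left g h)]

/-- For `q = 2n+1` odd, `1 ≤ t ≤ q-1`, and `g = gcd(t,q)`, the Lee weight of the
codeword `(t, 2t, …, nt)` over `ZMod q` is `(q² - g²)/8`. -/
theorem stmt6 (n q t : ℕ) (hn : 1 ≤ n) (hq : q = 2 * n + 1)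
    (ht1 : 1 ≤ t) (ht2 : t ≤ q - 1) :
    ∑ k ∈ Finset.Icc 1 n, leeWt q ((k : ZMod q) * (t : ZMod q))
      = (q ^ 2 - (Nat.gcd t q) ^ 2) / 8 := by
  haveI : NeZero q := ⟨by omega⟩
  set g := Nat.gcd t q with hgdef
  have hg0 : 0 < g := Nat.gcd_pos_of_pos_left _ ht1
  have hgt : g ∣ t := Nat.gcd_dvd_left t q
  have hgq : g ∣ q := Nat.gcd_dvd_right t q
  set d := q / g with hddef
  set s := t / g with hsdef
  have hqd : q = g * d := (Nat.mul_div_cancel' hgq).symm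
  have hts : t = g * s := (Nat.mul_div_cancel' hgt).symm
  have hcop : Nat.Coprime s d := Nat.coprime_div_gcd_div_gcd hg0
  have hd0 : 0 < d := Nat.div_pos (Nat.le_of_dvd (by omega) hgq) hg0
  have hdvd : d ∣ q := ⟨g, by rw [hqd, mul_comm]⟩
  haveI : NeZero d := ⟨by omega⟩
  -- d is odd
  have hdodd : d % 2 = 1 := by
    rcases Nat.even_or_odd d with he | ho
    · exfalso
      have h2 : (2 : ℕ) ∣ q := dvd_trans he.two_dvd hdvd
      omega
    · rcases ho with ⟨c, hc⟩
      omega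
  set m := (d - 1) / 2 with hmdef
  have hd : d = 2 * m + 1 := by omega
  set F : ℕ → ℕ := fun k => leeWt d ((k * s : ℕ) : ZMod d) with hF
  -- term rewrite
  have hterm : ∀ k : ℕ, leeWt q ((k : ZMod q) * (t : ZMod q)) = g * F k := by
    intro k
    have h1 : ((k : ZMod q) * (t : ZMod q)) = ((k * t : ℕ) : ZMod q) := by push_cast; ring
    rw [h1]
    have h2 : k * t = g * (k * s) := by rw [hts]; ring
    have hx : (k * s) % d ≤ d := (Nat.mod_lt _ hd0).le
    simp only [hF, leeWt, ZMod.val_natCast]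
    rw [h2, hqd, Nat.mul_mod_mul_left]
    exact mul_min_sub g _ d hx
  -- F is periodic with period d
  have hper : ∀ k, F (k + d) = F k := by
    intro k
    have : (((k + d) * s : ℕ) : ZMod d) = ((k * s : ℕ) : ZMod d) := by
      push_cast
      rw [ZMod.natCast_self]
      ring
    simp only [hF, this]
  -- F (q - k) = F k for k ≤ q
  have hrefl : ∀ k, k ≤ q → F (q - k) = F k := by
    intro k hk
    have hcast : (((q - k) * s : ℕ) : ZMod d) = -(((k * s : ℕ) : ZMod d)) := by
      have hq0 : ((q : ℕ) : ZMod d) = 0 := (ZMod.natCast_eq_zero_iff q d).2 hdvd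
      push_cast [Nat.cast_sub hk]
      rw [hq0]
      ring
    simp only [hF, hcast]
    exact leeWt_neg' d _
  -- sum over range d
  have hsumd : ∑ k ∈ range d, F k = m * (m + 1) := by
    have e1 : ∀ k : ℕ, F k = (fun x : ZMod d => leeWt d (x * (s : ZMod d))) (k : ZMod d) := by
      intro k; simp only [hF]; push_cast; rfl
    calc ∑ k ∈ range d, F k
        = ∑ k ∈ range d, (fun x : ZMod d => leeWt d (x * (s : ZMod d))) (k : ZMod d) :=
          Finset.sum_congr rfl fun k _ => e1 k
      _ = ∑ x : ZMod d, leeWt d (x * (s : ZMod d)) := sum_range_zmod d (fun x => leeWt d (x * (s : ZMod d)))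
      _ = ∑ x : ZMod d, leeWt d x := by
          have := sum_mul_unit d (fun x => leeWt d x) (ZMod.unitOfCoprime s hcop)
          rw [← this]
          exact Finset.sum_congr rfl fun x _ => by rw [ZMod.coe_unitOfCoprime]
      _ = ∑ r ∈ range d, leeWt d (r : ZMod d) := (sum_range_zmod d _).symm
      _ = ∑ r ∈ range d, min r (d - r) := by
          refine Finset.sum_congr rfl fun r hr => ?_
          have hrd : r < d := Finset.mem_range.1 hr
          rw [leeWt, ZMod.val_natCast, Nat.mod_eq_of_lt hrd]
      _ = m * (m + 1) := by rw [hd]; exact gaussMin m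
  -- sum over range q
  have hsumq : ∑ k ∈ range q, F k = g * (m * (m + 1)) := by
    rw [hqd, sum_periodic d F hper g, hsumd]
  -- split range q
  set H := ∑ k ∈ Finset.Icc 1 n, F k with hH
  have hsplit : 2 * H = g * (m * (m + 1)) := by
    rw [← hsumq]
    have h0 : F 0 = 0 := by simp [hF, leeWt]
    have e1 : range q = Finset.Ico 0 q := by rw [Finset.range_eq_Ico]
    rw [e1, ← Finset.sum_Ico_consecutive F (Nat.zero_le 1) (by omega : 1 ≤ q),
      ← Finset.sum_Ico_consecutive F (by omega : 1 ≤ n + 1) (by omega : n + 1 ≤ q)]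
    have e2 : ∑ k ∈ Finset.Ico 0 1, F k = 0 := by simp [h0]
    have e3 : Finset.Ico 1 (n + 1) = Finset.Icc 1 n := by
      rw [Finset.Ico_add_one_right_eq_Icc]
    have e4 : ∑ k ∈ Finset.Ico (n + 1) q, F k = H := by
      rw [hH]
      refine Finset.sum_nbij' (fun k => q - k) (fun k => q - k) ?_ ?_ ?_ ?_ ?_
      · intro a ha
        simp only [Finset.mem_Ico] at ha
        simp only [Finset.mem_Icc]
        omega
      · intro a ha
        simp only [Finset.mem_Icc] at ha
        simp only [Finset.mem_Ico]
        omega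
      · intro a ha
        simp only [Finset.mem_Ico] at ha
        show q - (q - a) = a
        omega
      · intro a ha
        simp only [Finset.mem_Icc] at ha
        show q - (q - a) = a
        omega
      · intro a ha
        simp only [Finset.mem_Ico] at ha
        show F a = F (q - a)
        exact (hrefl a (by omega)).symm
    rw [e2, e3, e4]
    omega
  -- finish
  have hlhs : ∑ k ∈ Finset.Icc 1 n, leeWt q ((k : ZMod q) * (t : ZMod q)) = g * H := by
    rw [hH, Finset.mul_sum]
    exact Finset.sum_congr rfl fun k _ => hterm k
  rw [hlhs]
  have hq2 : q ^ 2 = g ^ 2 + 8 * (g * H) := by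
    have e : 8 * (g * H) = 4 * (g * (2 * H)) := by ring
    rw [e, hsplit, hqd, hd]
    ring
  rw [hq2, Nat.add_sub_cancel_left]
  rw [Nat.mul_div_cancel_left _ (by norm_num : (0:ℕ) < 8)]
end

section
/- Let t ≥ 1 be an integer and set q = 2t² + 2t + 1. Then the number of distinct values of ‖a‖_q + ‖(2t+1)·a‖_q as a ranges over the nonzero elements of ZMod q equals t(t+1)/2. That is, the linear code over ZMod q generated by the vector (1, 2t+1) has exactly (t² + t)/2 distinct nonzero Lee weights. -/
section Aux

variable {t q c : ℕ}

private lemma leeWt_neg (q : ℕ) [NeZero q] (z : ZMod q) : leeWt q (-z) = leeWt q z := by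
  by_cases hz : z = 0
  · simp [hz]
  · have : NeZero z := ⟨hz⟩
    have h1 : z.val < q := z.val_lt
    have h2 : z.val ≠ 0 := fun h => hz ((ZMod.val_eq_zero z).1 h)
    rw [leeWt, leeWt, ZMod.val_neg_of_ne_zero]
    omega

private lemma key_cc (hq : q = 2 * t ^ 2 + 2 * t + 1) (hc : c = 2 * t + 1) :
    (c : ZMod q) * (c : ZMod q) = -1 := by
  have hcc : c * c + 1 = 2 * q := by subst hq hc; ring
  have h := congrArg (fun n : ℕ => (n : ZMod q)) hcc
  push_cast at h
  rw [ZMod.natCast_self] at h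
  linear_combination h

private lemma key_inv (ht : 1 ≤ t) (hq : q = 2 * t ^ 2 + 2 * t + 1) (hc : c = 2 * t + 1)
    {x : ℕ} (hx1 : 1 ≤ x) (hx2 : x < q) : c * (c * x % q) % q = q - x := by
  have hq5 : 5 ≤ q := by nlinarith
  have : NeZero q := ⟨by omega⟩
  have h1 : ((c * (c * x % q) : ℕ) : ZMod q) = ((q - x : ℕ) : ZMod q) := by
    push_cast [ZMod.natCast_mod]
    rw [Nat.cast_sub hx2.le, ZMod.natCast_self]
    have hcc := key_cc hq hc
    linear_combination (x : ZMod q) * hcc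
  calc c * (c * x % q) % q = ((c * (c * x % q) : ℕ) : ZMod q).val := (ZMod.val_natCast _ _).symm
    _ = ((q - x : ℕ) : ZMod q).val := by rw [h1]
    _ = q - x := ZMod.val_natCast_of_lt (by omega)

private lemma key_inv2 (ht : 1 ≤ t) (hq : q = 2 * t ^ 2 + 2 * t + 1) (hc : c = 2 * t + 1)
    {x : ℕ} (hx1 : 1 ≤ x) (hx2 : x < q) : c * (q - c * x % q) % q = x := by
  have hq5 : 5 ≤ q := by nlinarith
  have : NeZero q := ⟨by omega⟩
  have hmlt : c * x % q < q := Nat.mod_lt _ (by omega)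
  have h1 : ((c * (q - c * x % q) : ℕ) : ZMod q) = ((x : ℕ) : ZMod q) := by
    push_cast [Nat.cast_sub hmlt.le, ZMod.natCast_mod, ZMod.natCast_self]
    have hcc := key_cc hq hc
    linear_combination (-(x : ZMod q)) * hcc
  calc c * (q - c * x % q) % q = ((c * (q - c * x % q) : ℕ) : ZMod q).val :=
        (ZMod.val_natCast _ _).symm
    _ = ((x : ℕ) : ZMod q).val := by rw [h1]
    _ = x := ZMod.val_natCast_of_lt (by omega)

private lemma key_pos (ht : 1 ≤ t) (hq : q = 2 * t ^ 2 + 2 * t + 1) (hc : c = 2 * t + 1)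
    {x : ℕ} (hx1 : 1 ≤ x) (hx2 : x < q) : 1 ≤ c * x % q := by
  rcases Nat.eq_zero_or_pos (c * x % q) with h | h
  · have h2 := key_inv ht hq hc hx1 hx2
    rw [h, Nat.mul_zero, Nat.zero_mod] at h2
    omega
  · exact h

/-- Injectivity of the weight on the "low" half. -/
private lemma key_inj (ht : 1 ≤ t) (hq : q = 2 * t ^ 2 + 2 * t + 1) (hc : c = 2 * t + 1)
    {T x y x' y' : ℕ} (hT : T = t * (t + 1))
    (hx : 1 ≤ x) (hxT : x ≤ T) (hy : 1 ≤ y) (hyT : y ≤ T)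
    (hx' : 1 ≤ x') (hxT' : x' ≤ T) (hy' : 1 ≤ y') (hyT' : y' ≤ T)
    (hmod : c * x % q = y) (hmod' : c * x' % q = y')
    (hw : x + y = x' + y') : x = x' := by
  have hqZ : (q : ℤ) = 2 * t ^ 2 + 2 * t + 1 := by rw [hq]; push_cast; ring
  have hcZ : (c : ℤ) = 2 * t + 1 := by rw [hc]; push_cast; ring
  set k : ℤ := ((c * x / q : ℕ) : ℤ) with hk
  set k' : ℤ := ((c * x' / q : ℕ) : ℤ) with hk'
  have hd1 : (c : ℤ) * x - y = q * k := by
    have h0 := Nat.div_add_mod (c * x) q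
    rw [hmod] at h0
    have h1 : (q : ℤ) * k + y = c * x := by rw [hk]; exact_mod_cast h0
    linarith
  have hd2 : (c : ℤ) * x' - y' = q * k' := by
    have h0 := Nat.div_add_mod (c * x') q
    rw [hmod'] at h0
    have h1 : (q : ℤ) * k' + y' = c * x' := by rw [hk']; exact_mod_cast h0
    linarith
  rw [hcZ, hqZ] at hd1 hd2
  -- the Gaussian-integer coordinates
  set u : ℤ := (x : ℤ) - t * k with hu
  set v : ℤ := (x : ℤ) - k * (t + 1) with hv
  set u' : ℤ := (x' : ℤ) - t * k' with hu'
  set v' : ℤ := (x' : ℤ) - k' * (t + 1) with hv'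
  have hQpos : (0:ℤ) < 2 * (t:ℤ) ^ 2 + 2 * t + 1 := by positivity
  have hqu : (2 * (t:ℤ) ^ 2 + 2 * t + 1) * u = x * (t + 1) + y * t := by
    rw [hu]; linear_combination (t : ℤ) * hd1
  have hqv : (2 * (t:ℤ) ^ 2 + 2 * t + 1) * v = y * (t + 1) - x * t := by
    rw [hv]; linear_combination ((t : ℤ) + 1) * hd1
  have hqu' : (2 * (t:ℤ) ^ 2 + 2 * t + 1) * u' = x' * (t + 1) + y' * t := by
    rw [hu']; linear_combination (t : ℤ) * hd2
  have hqv' : (2 * (t:ℤ) ^ 2 + 2 * t + 1) * v' = y' * (t + 1) - x' * t := by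
    rw [hv']; linear_combination ((t : ℤ) + 1) * hd2
  have htZ : (1 : ℤ) ≤ t := by exact_mod_cast ht
  have hTx : (x : ℤ) ≤ t * (t + 1) := by exact_mod_cast hT ▸ hxT
  have hTy : (y : ℤ) ≤ t * (t + 1) := by exact_mod_cast hT ▸ hyT
  have hTx' : (x' : ℤ) ≤ t * (t + 1) := by exact_mod_cast hT ▸ hxT'
  have hTy' : (y' : ℤ) ≤ t * (t + 1) := by exact_mod_cast hT ▸ hyT'
  have hxZ : (1 : ℤ) ≤ x := by exact_mod_cast hx
  have hyZ : (1 : ℤ) ≤ y := by exact_mod_cast hy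
  have hxZ' : (1 : ℤ) ≤ x' := by exact_mod_cast hx'
  have hyZ' : (1 : ℤ) ≤ y' := by exact_mod_cast hy'
  -- coordinates recover x and y
  have hxuv : (x : ℤ) = u * (t + 1) - v * t :=
    mul_left_cancel₀ hQpos.ne' (by linear_combination (-(t:ℤ) - 1) * hqu + (t:ℤ) * hqv)
  have hyuv : (y : ℤ) = u * t + v * (t + 1) :=
    mul_left_cancel₀ hQpos.ne' (by linear_combination (-(t:ℤ)) * hqu - ((t:ℤ) + 1) * hqv)
  have hxuv' : (x' : ℤ) = u' * (t + 1) - v' * t :=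
    mul_left_cancel₀ hQpos.ne' (by linear_combination (-(t:ℤ) - 1) * hqu' + (t:ℤ) * hqv')
  have hyuv' : (y' : ℤ) = u' * t + v' * (t + 1) :=
    mul_left_cancel₀ hQpos.ne' (by linear_combination (-(t:ℤ)) * hqu' - ((t:ℤ) + 1) * hqv')
  -- bounds on u and u'
  have hut : u ≤ t := by
    by_contra hcon
    push_neg at hcon
    have h1 : (2 * (t:ℤ) ^ 2 + 2 * t + 1) * (t + 1) ≤ (2 * (t:ℤ) ^ 2 + 2 * t + 1) * u :=
      mul_le_mul_of_nonneg_left (by linarith) hQpos.le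
    have h2 := mul_le_mul_of_nonneg_right hTx (by linarith : (0:ℤ) ≤ t + 1)
    have h3 := mul_le_mul_of_nonneg_right hTy (by linarith : (0:ℤ) ≤ t)
    linarith [hqu, h1, h2, h3]
  have hut' : u' ≤ t := by
    by_contra hcon
    push_neg at hcon
    have h1 : (2 * (t:ℤ) ^ 2 + 2 * t + 1) * (t + 1) ≤ (2 * (t:ℤ) ^ 2 + 2 * t + 1) * u' :=
      mul_le_mul_of_nonneg_left (by linarith) hQpos.le
    have h2 := mul_le_mul_of_nonneg_right hTx' (by linarith : (0:ℤ) ≤ t + 1)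
    have h3 := mul_le_mul_of_nonneg_right hTy' (by linarith : (0:ℤ) ≤ t)
    linarith [hqu', h1, h2, h3]
  -- the weight in terms of u, v
  have hwu : (x : ℤ) + y = u * (2 * t + 1) + v := by rw [hxuv, hyuv]; ring
  have hwu' : (x' : ℤ) + y' = u' * (2 * t + 1) + v' := by rw [hxuv', hyuv']; ring
  have hwZ : (x : ℤ) + y = x' + y' := by exact_mod_cast hw
  -- u = u'
  have huu : u = u' := by
    rcases lt_trichotomy u u' with h | h | h
    · exfalso
      have hdge : (1:ℤ) ≤ u' - u := by omega
      have hvv : v - v' = (u' - u) * (2 * t + 1) := by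
        linear_combination hwZ - hwu + hwu'
      have hb1 : v * t ≤ u * (t + 1) - 1 := by linarith [hxuv, hxZ]
      have hb2 : 1 - u' * t ≤ v' * (t + 1) := by linarith [hyuv', hyZ']
      have hdt : u ≤ (u' - u) * t :=
        le_trans hut (le_mul_of_one_le_left (by linarith) hdge)
      have P4 := mul_le_mul_of_nonneg_right hdt hQpos.le
      have P1 := mul_le_mul_of_nonneg_right hb1 (by linarith : (0:ℤ) ≤ t + 1)
      have P2 := mul_le_mul_of_nonneg_right hb2 (by linarith : (0:ℤ) ≤ t)
      have hvv2 : (v - v') * (t * (t + 1)) = ((u' - u) * (2 * t + 1)) * (t * (t + 1)) := by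
        rw [hvv]
      linarith [P1, P2, P4, hvv2, htZ]
    · exact h
    · exfalso
      have hdge : (1:ℤ) ≤ u - u' := by omega
      have hvv : v' - v = (u - u') * (2 * t + 1) := by
        linear_combination -hwZ + hwu - hwu'
      have hb1 : v' * t ≤ u' * (t + 1) - 1 := by linarith [hxuv', hxZ']
      have hb2 : 1 - u * t ≤ v * (t + 1) := by linarith [hyuv, hyZ]
      have hdt : u' ≤ (u - u') * t :=
        le_trans hut' (le_mul_of_one_le_left (by linarith) hdge)
      have P4 := mul_le_mul_of_nonneg_right hdt hQpos.le
      have P1 := mul_le_mul_of_nonneg_right hb1 (by linarith : (0:ℤ) ≤ t + 1)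
      have P2 := mul_le_mul_of_nonneg_right hb2 (by linarith : (0:ℤ) ≤ t)
      have hvv2 : (v' - v) * (t * (t + 1)) = ((u - u') * (2 * t + 1)) * (t * (t + 1)) := by
        rw [hvv]
      linarith [P1, P2, P4, hvv2, htZ]
  have hvveq : v = v' := by
    rw [huu] at hwu
    linarith [hwu, hwu', hwZ]
  have hxeq : (x : ℤ) = x' := by rw [hxuv, hxuv', huu, hvveq]
  exact_mod_cast hxeq

/-- The number of distinct weights, as a pure statement about naturals. -/
private lemma key_count (ht : 1 ≤ t) (hq : q = 2 * t ^ 2 + 2 * t + 1) (hc : c = 2 * t + 1)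
    {T : ℕ} (hT : T = t * (t + 1)) :
    ((Finset.Icc 1 T).image (fun x => x + min (c * x % q) (q - c * x % q))).card
      = t * (t + 1) / 2 := by
  have hqT : q = 2 * T + 1 := by subst hq hT; ring
  have hT2 : 2 ≤ T := by subst hT; nlinarith
  have hqpos : 0 < q := by omega
  set F := fun x => x + min (c * x % q) (q - c * x % q) with hF
  set A := (Finset.Icc 1 T).filter (fun x => c * x % q ≤ T) with hA
  have hymem : ∀ x, 1 ≤ x → x ≤ T → 1 ≤ c * x % q ∧ c * x % q < q :=
    fun x h1 h2 => ⟨key_pos ht hq hc h1 (by omega), Nat.mod_lt _ hqpos⟩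
  -- the image over A equals the image over all of Icc 1 T
  have himage : (Finset.Icc 1 T).image F = A.image F := by
    apply Finset.Subset.antisymm
    · intro w hw
      rw [Finset.mem_image] at hw ⊢
      obtain ⟨x, hx, hwx⟩ := hw
      rw [Finset.mem_Icc] at hx
      by_cases hcase : c * x % q ≤ T
      · exact ⟨x, Finset.mem_filter.2 ⟨Finset.mem_Icc.2 hx, hcase⟩, hwx⟩
      · push_neg at hcase
        obtain ⟨hy1, hy2⟩ := hymem x hx.1 hx.2
        have hinv2 := key_inv2 ht hq hc hx.1 (by omega : x < q)
        refine ⟨q - c * x % q,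
          Finset.mem_filter.2 ⟨Finset.mem_Icc.2 ⟨by omega, by omega⟩, ?_⟩, ?_⟩
        · rw [hinv2]; exact hx.2
        · rw [← hwx]; simp only [hF, hinv2]; omega
    · exact Finset.image_subset_image (Finset.filter_subset _ _)
  -- F is injective on A
  have hinj : Set.InjOn F A := by
    intro x hx x' hx' hFxx
    simp only [hA, Finset.coe_filter, Set.mem_setOf_eq, Finset.mem_Icc] at hx hx'
    obtain ⟨⟨hx1, hx2⟩, hx3⟩ := hx
    obtain ⟨⟨hx1', hx2'⟩, hx3'⟩ := hx'
    obtain ⟨hy1, hy2⟩ := hymem x hx1 hx2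
    obtain ⟨hy1', hy2'⟩ := hymem x' hx1' hx2'
    simp only [hF] at hFxx
    exact key_inj ht hq hc hT hx1 hx2 hy1 hx3 hx1' hx2' hy1' hx3' rfl rfl (by omega)
  -- half of Icc 1 T lands in A
  have hAB : A.card + ((Finset.Icc 1 T).filter (fun x => ¬ c * x % q ≤ T)).card = T := by
    rw [hA, Finset.card_filter_add_card_filter_not, Nat.card_Icc]
    omega
  have hABeq : A.card = ((Finset.Icc 1 T).filter (fun x => ¬ c * x % q ≤ T)).card := by
    apply Finset.card_nbij' (i := fun x => c * x % q) (j := fun x => q - c * x % q)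
    · intro x hx
      simp only [hA, Finset.mem_coe, Finset.mem_filter, Finset.mem_Icc] at hx ⊢
      obtain ⟨⟨hx1, hx2⟩, hx3⟩ := hx
      obtain ⟨hy1, hy2⟩ := hymem x hx1 hx2
      have hinv := key_inv ht hq hc hx1 (by omega : x < q)
      exact ⟨⟨hy1, hx3⟩, by omega⟩
    · intro x hx
      simp only [hA, Finset.mem_coe, Finset.mem_filter, Finset.mem_Icc] at hx ⊢
      obtain ⟨⟨hx1, hx2⟩, hx3⟩ := hx
      obtain ⟨hy1, hy2⟩ := hymem x hx1 hx2
      have hinv2 := key_inv2 ht hq hc hx1 (by omega : x < q)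
      exact ⟨⟨by omega, by omega⟩, by omega⟩
    · intro x hx
      simp only [hA, Finset.mem_coe, Finset.mem_filter, Finset.mem_Icc] at hx
      obtain ⟨⟨hx1, hx2⟩, hx3⟩ := hx
      have hinv := key_inv ht hq hc hx1 (by omega : x < q)
      simp only [hinv]
      omega
    · intro x hx
      simp only [Finset.mem_coe, Finset.mem_filter, Finset.mem_Icc] at hx
      obtain ⟨⟨hx1, hx2⟩, hx3⟩ := hx
      exact key_inv2 ht hq hc hx1 (by omega : x < q)
  rw [himage, Finset.card_image_of_injOn hinj]
  omega

end Aux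

/-- For `t ≥ 1` and `q = 2t²+2t+1`, the code over `ZMod q` generated by
`(1, 2t+1)` has exactly `t(t+1)/2` distinct nonzero Lee weights, the Lee weight
of the codeword `(a, (2t+1)a)` being `‖a‖_q + ‖(2t+1)a‖_q`. -/
theorem stmt10 (t q : ℕ) (ht : 1 ≤ t) (hq : q = 2 * t ^ 2 + 2 * t + 1) :
    {w : ℕ | ∃ a : ZMod q, a ≠ 0 ∧
        w = leeWt q a + leeWt q (((2 * t + 1 : ℕ) : ZMod q) * a)}.ncard
      = t * (t + 1) / 2 := by
  have hT2 : 2 ≤ t * (t + 1) := by nlinarith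
  have hqT : q = 2 * (t * (t + 1)) + 1 := by subst hq; ring
  have hq5 : 5 ≤ q := by omega
  have : NeZero q := ⟨by omega⟩
  set c : ℕ := 2 * t + 1 with hc
  set T : ℕ := t * (t + 1) with hT
  set F := fun x => x + min (c * x % q) (q - c * x % q) with hF
  have hset : {w : ℕ | ∃ a : ZMod q, a ≠ 0 ∧
        w = leeWt q a + leeWt q (((c : ℕ) : ZMod q) * a)}
      = ↑((Finset.Icc 1 T).image F) := by
    ext w
    simp only [Set.mem_setOf_eq, Finset.coe_image, Set.mem_image, Finset.mem_coe,
      Finset.mem_Icc]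
    constructor
    · rintro ⟨a, ha, rfl⟩
      have hval1 : 1 ≤ a.val := by
        rcases Nat.eq_zero_or_pos a.val with h | h
        · exact absurd ((ZMod.val_eq_zero a).1 h) ha
        · exact h
      have hval2 : a.val < q := a.val_lt
      by_cases hcase : a.val ≤ T
      · refine ⟨a.val, ⟨hval1, hcase⟩, ?_⟩
        have ha2 : ((a.val : ℕ) : ZMod q) = a := ZMod.natCast_rightInverse a
        have hlee1 : leeWt q a = a.val := by rw [leeWt]; omega
        have hmul : ((c * a.val : ℕ) : ZMod q) = ((c : ℕ) : ZMod q) * a := by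
          rw [Nat.cast_mul, ha2]
        have hlee2 : leeWt q (((c : ℕ) : ZMod q) * a)
            = min (c * a.val % q) (q - c * a.val % q) := by
          rw [← hmul, leeWt, ZMod.val_natCast]
        simp only [hF, hlee1, hlee2]
      · push_neg at hcase
        refine ⟨q - a.val, ⟨by omega, by omega⟩, ?_⟩
        have hax : ((q - a.val : ℕ) : ZMod q) = -a := by
          rw [Nat.cast_sub hval2.le, ZMod.natCast_self, ZMod.natCast_rightInverse a,
            zero_sub]
        have hlee1 : leeWt q a = q - a.val := by rw [leeWt]; omega
        have hmul : ((c : ℕ) : ZMod q) * a = -(((c * (q - a.val) : ℕ)) : ZMod q) := by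
          have h2 : ((c * (q - a.val) : ℕ) : ZMod q)
              = ((c : ℕ) : ZMod q) * ((q - a.val : ℕ) : ZMod q) := Nat.cast_mul _ _
          rw [h2, hax]; ring
        have hlee2 : leeWt q (((c : ℕ) : ZMod q) * a)
            = min (c * (q - a.val) % q) (q - c * (q - a.val) % q) := by
          rw [hmul, leeWt_neg, leeWt, ZMod.val_natCast]
        simp only [hF, hlee1, hlee2]
    · rintro ⟨x, ⟨hx1, hx2⟩, rfl⟩
      refine ⟨((x : ℕ) : ZMod q), ?_, ?_⟩
      · intro h0
        have := ZMod.val_natCast_of_lt (show x < q by omega)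
        rw [h0, ZMod.val_zero] at this
        omega
      · have hlee1 : leeWt q ((x : ℕ) : ZMod q) = x := by
          rw [leeWt, ZMod.val_natCast_of_lt (show x < q by omega)]
          omega
        have hmul : ((c : ℕ) : ZMod q) * ((x : ℕ) : ZMod q) = ((c * x : ℕ) : ZMod q) :=
          (Nat.cast_mul _ _).symm
        have hlee2 : leeWt q (((c : ℕ) : ZMod q) * ((x : ℕ) : ZMod q))
            = min (c * x % q) (q - c * x % q) := by
          rw [hmul, leeWt, ZMod.val_natCast]
        simp only [hF, hlee1, hlee2]
  rw [hset, Set.ncard_coe_finset]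
  exact key_count ht hq hc hT
end
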